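/- Let G = Z^n ⋊_φ Z and u = w t^s, v = x t^s in normal form with φ^s the identity automorphism. Then u and v are conjugate in G if and only if there exists e ∈ Z with x = φ^e(w); in that case t^e conjugates u to v. -/

import Mathlib

open Matrix

def mAut {n : ℕ} (M : (Matrix (Fin n) (Fin n) ℤ)ˣ) : (Fin n → ℤ) ≃+ (Fin n → ℤ) where
  toFun v := (M : Matrix (Fin n) (Fin n) ℤ) *ᵥ v
  invFun v := (↑M⁻¹ : Matrix (Fin n) (Fin n) ℤ) *ᵥ v
  left_inv v := by simp [Matrix.mulVec_mulVec]
  right_inv v := by simp [Matrix.mulVec_mulVec]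
  map_add' u v := by simp [Matrix.mulVec_add]

def tAct {n : ℕ} (M : (Matrix (Fin n) (Fin n) ℤ)ˣ) :
    Multiplicative ℤ →* MulAut (Multiplicative (Fin n → ℤ)) :=
  zpowersHom _ (AddEquiv.toMultiplicative (mAut M))

abbrev G (n : ℕ) (M : (Matrix (Fin n) (Fin n) ℤ)ˣ) :=
  SemidirectProduct (Multiplicative (Fin n → ℤ)) (Multiplicative ℤ) (tAct M)

def nf {n : ℕ} (M : (Matrix (Fin n) (Fin n) ℤ)ˣ) (w : Fin n → ℤ) (k : ℤ) : G n M :=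
  SemidirectProduct.inl (Multiplicative.ofAdd w) * SemidirectProduct.inr (Multiplicative.ofAdd k)

/-!
Conjugating `w t^s` by `a t^e` gives `(a + φ^e w - φ^s a) t^s`. When `φ^s = 1` the translation
part `a` cancels, so the conjugates of `w t^s` are exactly the elements `φ^e(w) t^s`, and the
exponent `e` of the conjugator can be read off.
-/

namespace SemidirectProduct

variable {N H : Type*} [CommGroup N] [CommGroup H] {φ : H →* MulAut N}

theorem mul_mk_mul_inv_of_map_eq_one {h : H} (hφ : φ h = 1) (g : N ⋊[φ] H) (w : N) :
    g * ⟨w, h⟩ * g⁻¹ = ⟨φ g.right w, h⟩ := by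
  ext
  · simp only [mul_left, mul_right, inv_left, ← MulAut.mul_apply, ← map_mul,
      mul_inv_cancel_comm, hφ, MulAut.one_apply]
  · simp [mul_inv_cancel_comm]

end SemidirectProduct

def mulVecMulAut {n : ℕ} :
    (Matrix (Fin n) (Fin n) ℤ)ˣ →* MulAut (Multiplicative (Fin n → ℤ)) where
  toFun M := AddEquiv.toMultiplicative (mAut M)
  map_one' := by ext; simp [mAut]
  map_mul' A B := by ext; simp [mAut, Matrix.mulVec_mulVec]

section NormalForm

variable {n : ℕ} (M : (Matrix (Fin n) (Fin n) ℤ)ˣ)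

theorem tAct_ofAdd_apply (k : ℤ) (v : Fin n → ℤ) :
    tAct M (Multiplicative.ofAdd k) (Multiplicative.ofAdd v) =
      Multiplicative.ofAdd ((↑(M ^ k) : Matrix (Fin n) (Fin n) ℤ) *ᵥ v) := by
  change (AddEquiv.toMultiplicative (mAut M) ^ k) _ = mulVecMulAut (M ^ k) _
  rw [map_zpow]
  rfl

theorem tAct_ofAdd_eq_one {s : ℤ} (hpow : M ^ s = 1) : tAct M (Multiplicative.ofAdd s) = 1 := by
  refine MulEquiv.ext fun v => ?_
  rw [MulAut.one_apply, ← ofAdd_toAdd v, tAct_ofAdd_apply, hpow, Units.val_one, one_mulVec]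

theorem nf_eq_mk (w : Fin n → ℤ) (k : ℤ) :
    nf M w k = ⟨Multiplicative.ofAdd w, Multiplicative.ofAdd k⟩ := by
  ext <;> simp [nf]

theorem nf_right (w : Fin n → ℤ) (k : ℤ) : (nf M w k).right = Multiplicative.ofAdd k := by
  simp [nf]

theorem nf_inj {w x : Fin n → ℤ} {k : ℤ} : nf M w k = nf M x k ↔ w = x := by
  simp [nf_eq_mk, SemidirectProduct.ext_iff]

theorem conj_nf {s : ℤ} (hpow : M ^ s = 1) (c : G n M) (w : Fin n → ℤ) :
    c * nf M w s * c⁻¹ =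
      nf M ((↑(M ^ Multiplicative.toAdd c.right) : Matrix (Fin n) (Fin n) ℤ) *ᵥ w) s := by
  rw [nf_eq_mk, nf_eq_mk,
    SemidirectProduct.mul_mk_mul_inv_of_map_eq_one (tAct_ofAdd_eq_one M hpow),
    ← tAct_ofAdd_apply, ofAdd_toAdd]

end NormalForm

/-- If φ^s is the identity, then u = w t^s and v = x t^s are conjugate in G iff
    x = φ^e(w) for some e ∈ ℤ; in that case t^e conjugates u to v. -/
theorem conj_iff_orbit {n : ℕ} (M : (Matrix (Fin n) (Fin n) ℤ)ˣ)
    (w x : Fin n → ℤ) (s : ℤ) (hpow : M ^ s = 1) :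
    (IsConj (nf M w s) (nf M x s) ↔
      ∃ e : ℤ, x = (↑(M ^ e) : Matrix (Fin n) (Fin n) ℤ) *ᵥ w) ∧
    ∀ e : ℤ, x = (↑(M ^ e) : Matrix (Fin n) (Fin n) ℤ) *ᵥ w →
      nf M 0 e * nf M w s * (nf M 0 e)⁻¹ = nf M x s := by
  have conj_by_t : ∀ e : ℤ, x = (↑(M ^ e) : Matrix (Fin n) (Fin n) ℤ) *ᵥ w →
      nf M 0 e * nf M w s * (nf M 0 e)⁻¹ = nf M x s := by
    rintro e rfl
    rw [conj_nf M hpow, nf_right, toAdd_ofAdd]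
  refine ⟨⟨fun h => ?_, fun ⟨e, he⟩ => isConj_iff.mpr ⟨nf M 0 e, conj_by_t e he⟩⟩,
    conj_by_t⟩
  obtain ⟨c, hc⟩ := isConj_iff.mp h
  rw [conj_nf M hpow, nf_inj] at hc
  exact ⟨_, hc.symm⟩
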